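/- Let E be a directed graph, K a field, A = L_K(E) or C_K(E), and let c = e_1⋯e_n be a closed path based at the vertex u (s(c) = r(c) = u). Consider the linear map T_c : uAu → uAu given by T_c(x) = c* x c. If ω is a fixed point of T_c having degree zero, then ω ∈ Ku. Consequently, if z is a degree-zero central element of A with Peirce decomposition z = Σ_{v ∈ E^0} z_v and there exists a closed path based at u, then z_u ∈ Ku. -/

import Mathlib

/-! Basic infrastructure: directed graphs and their path algebras.

The path algebra `KE` is realized as the non-unital subalgebra generated by the
(images of the) vertices and edges inside the unital algebra `PA K E`, which is the
quotient of the free algebra on vertices and edges by the usual path-algebra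
relations (vertices are orthogonal idempotents acting as local units on edges).
Words of composable edges are exactly the paths, so `KE` has the paths as a basis. -/

/-- A directed graph `E = (E⁰, E¹, s, r)`. -/
structure DirGraph : Type 1 where
  V : Type
  Edge : Type
  s : Edge → V
  r : Edge → V

/-- A (non-unital, possibly non-closed) subset `S` of an algebra is *prime* if it is nonzero
and `a S b = 0` implies `a = 0` or `b = 0` for `a, b ∈ S`. -/
def IsPrimeSet {A : Type} [NonUnitalNonAssocSemiring A] (S : Set A) : Prop :=
  (∃ a ∈ S, a ≠ 0) ∧ ∀ a ∈ S, ∀ b ∈ S, (∀ x ∈ S, a * x * b = 0) → a = 0 ∨ b = 0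

/-- `J` is a two-sided ideal of the (possibly non-unital) subalgebra with carrier `S`. -/
def IsIdealOf (K : Type) [Field K] {A : Type} [Ring A] [Algebra K A] (S J : Set A) : Prop :=
  J ⊆ S ∧ (0 : A) ∈ J ∧ (∀ x ∈ J, ∀ y ∈ J, x + y ∈ J) ∧
    (∀ k : K, ∀ x ∈ J, k • x ∈ J) ∧ (∀ a ∈ S, ∀ x ∈ J, a * x ∈ J ∧ x * a ∈ J)

namespace DirGraph

/-- Generators of the path algebra: vertices and edges. -/
abbrev Gen (E : DirGraph) : Type := E.V ⊕ E.Edge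

variable (K : Type) [Field K] (E : DirGraph)

/-- The defining relations of the path algebra: vertices are orthogonal idempotents,
`s(e)·e = e`, `e·r(e) = e`, and all other vertex-edge products vanish. -/
inductive PathRel : FreeAlgebra K E.Gen → FreeAlgebra K E.Gen → Prop
  | vv_eq (u : E.V) :
      PathRel (FreeAlgebra.ι K (Sum.inl u) * FreeAlgebra.ι K (Sum.inl u))
        (FreeAlgebra.ι K (Sum.inl u))
  | vv_ne (u v : E.V) : u ≠ v →
      PathRel (FreeAlgebra.ι K (Sum.inl u) * FreeAlgebra.ι K (Sum.inl v)) 0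
  | ve_eq (e : E.Edge) :
      PathRel (FreeAlgebra.ι K (Sum.inl (E.s e)) * FreeAlgebra.ι K (Sum.inr e))
        (FreeAlgebra.ι K (Sum.inr e))
  | ve_ne (u : E.V) (e : E.Edge) : E.s e ≠ u →
      PathRel (FreeAlgebra.ι K (Sum.inl u) * FreeAlgebra.ι K (Sum.inr e)) 0
  | ev_eq (e : E.Edge) :
      PathRel (FreeAlgebra.ι K (Sum.inr e) * FreeAlgebra.ι K (Sum.inl (E.r e)))
        (FreeAlgebra.ι K (Sum.inr e))
  | ev_ne (e : E.Edge) (u : E.V) : E.r e ≠ u →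
      PathRel (FreeAlgebra.ι K (Sum.inr e) * FreeAlgebra.ι K (Sum.inl u)) 0

/-- The ambient unital algebra (the unitalization of the path algebra). -/
abbrev PA : Type := RingQuot (E.PathRel K)

/-- The image of a vertex in the path algebra. -/
noncomputable def vtx (u : E.V) : E.PA K :=
  RingQuot.mkAlgHom K (E.PathRel K) (FreeAlgebra.ι K (Sum.inl u))

/-- The image of an edge in the path algebra. -/
noncomputable def edg (e : E.Edge) : E.PA K :=
  RingQuot.mkAlgHom K (E.PathRel K) (FreeAlgebra.ι K (Sum.inr e))

/-- The path algebra `KE`: the (non-unital) subalgebra spanned by all paths, i.e.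
generated by the vertices and edges. -/
noncomputable def KE : NonUnitalSubalgebra K (E.PA K) :=
  NonUnitalAlgebra.adjoin K (Set.range (E.vtx K) ∪ Set.range (E.edg K))

/-- The center `Z(KE)` of the path algebra. -/
def relCenter : Set (E.PA K) :=
  {z | z ∈ E.KE K ∧ ∀ a ∈ E.KE K, a * z = z * a}

/-- `E.IsPathFrom u v l` : the list of edges `l` is a path from `u` to `v`
(`l = []` is the trivial path at `u = v`). -/
def IsPathFrom : E.V → E.V → List E.Edge → Prop
  | u, v, [] => u = v
  | u, v, e :: l => E.s e = u ∧ IsPathFrom (E.r e) v l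

/-- The element of the path algebra corresponding to the path starting at `u`
with list of edges `l` (for `l = []` this is the vertex `u` itself). -/
noncomputable def pathElem (u : E.V) (l : List E.Edge) : E.PA K :=
  E.vtx K u * (l.map (E.edg K)).prod

/-- The sum of all vertices: the unit of `KE` when `E⁰` is finite. -/
noncomputable def unitKE : E.PA K := ∑ᶠ u : E.V, E.vtx K u

/-- The scalar multiples `K·1` of the unit of `KE`. -/
noncomputable def scalarSet : Set (E.PA K) := Set.range fun k : K => k • E.unitKE K

/-- One step in the underlying undirected graph. -/
def Step (u v : E.V) : Prop :=
  (∃ e : E.Edge, E.s e = u ∧ E.r e = v) ∨ (∃ e : E.Edge, E.s e = v ∧ E.r e = u)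

/-- `u ∼ v` : the vertices `u` and `v` are connected in the underlying undirected graph. -/
def Connected (u v : E.V) : Prop := Relation.ReflTransGen E.Step u v

/-- The graph `E` is connected. -/
def IsConnectedGraph : Prop := ∀ u v : E.V, E.Connected u v

/-- The graph `E` is a cycle: `n ≥ 1` vertices `u₁, …, uₙ` and `n` edges `f₁, …, fₙ` with
`s(fᵢ) = uᵢ`, `r(fᵢ) = uᵢ₊₁` (indices mod `n`). -/
def IsCycleGraph : Prop :=
  ∃ n : ℕ, ∃ hn : 0 < n, ∃ (hv : Fin n ≃ E.V) (he : Fin n ≃ E.Edge),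
    ∀ i : Fin n, E.s (he i) = hv i ∧ E.r (he i) = hv ⟨(i.1 + 1) % n, Nat.mod_lt _ hn⟩

end DirGraph

namespace DirGraph

/-- The extended graph `Ê`: same vertices, edges `E¹ ⊕ (E¹)*`, where the ghost edge `e*`
(second component) has `s(e*) = r(e)` and `r(e*) = s(e)`. -/
def ext (E : DirGraph) : DirGraph where
  V := E.V
  Edge := E.Edge ⊕ E.Edge
  s := Sum.elim E.s E.r
  r := Sum.elim E.r E.s

variable (K : Type) [Field K] (E : DirGraph)

/-- Defining relations of the Cohn (`t = false`) and Leavitt (`t = true`) path algebras: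
the path-algebra relations of the extended graph, the relations (CK1)
`e*e' = δ_{e,e'} r(e)`, and — only for `t = true` — the relations (CK2)
`v = Σ_{s(e)=v} ee*` at every regular vertex `v`. -/
inductive CLRel : Bool → FreeAlgebra K E.ext.Gen → FreeAlgebra K E.ext.Gen → Prop
  | base (t : Bool) {a b : FreeAlgebra K E.ext.Gen} : E.ext.PathRel K a b → CLRel t a b
  | ck1_eq (t : Bool) (e : E.Edge) :
      CLRel t (FreeAlgebra.ι K (Sum.inr (Sum.inr e)) * FreeAlgebra.ι K (Sum.inr (Sum.inl e)))
        (FreeAlgebra.ι K (Sum.inl (E.r e)))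
  | ck1_ne (t : Bool) (e f : E.Edge) : e ≠ f →
      CLRel t (FreeAlgebra.ι K (Sum.inr (Sum.inr e)) * FreeAlgebra.ι K (Sum.inr (Sum.inl f))) 0
  | ck2 (v : E.V) (h : {e : E.Edge | E.s e = v}.Finite)
      (hne : {e : E.Edge | E.s e = v}.Nonempty) :
      CLRel true (FreeAlgebra.ι K (Sum.inl v))
        (h.toFinset.sum fun e =>
          FreeAlgebra.ι K (Sum.inr (Sum.inl e)) * FreeAlgebra.ι K (Sum.inr (Sum.inr e)))

/-- The ambient unital algebra containing the Cohn (`t = false`) or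
Leavitt (`t = true`) path algebra. -/
abbrev CL (t : Bool) : Type := RingQuot (E.CLRel K t)

/-- The image of a vertex in `C_K(E)` / `L_K(E)`. -/
noncomputable def clvtx (t : Bool) (u : E.V) : E.CL K t :=
  RingQuot.mkAlgHom K (E.CLRel K t) (FreeAlgebra.ι K (Sum.inl u))

/-- The image of a (real) edge in `C_K(E)` / `L_K(E)`. -/
noncomputable def cledg (t : Bool) (e : E.Edge) : E.CL K t :=
  RingQuot.mkAlgHom K (E.CLRel K t) (FreeAlgebra.ι K (Sum.inr (Sum.inl e)))

/-- The image of a ghost edge `e*` in `C_K(E)` / `L_K(E)`. -/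
noncomputable def clghost (t : Bool) (e : E.Edge) : E.CL K t :=
  RingQuot.mkAlgHom K (E.CLRel K t) (FreeAlgebra.ι K (Sum.inr (Sum.inr e)))

/-- The Cohn path algebra `C_K(E)` (`t = false`) or Leavitt path algebra `L_K(E)`
(`t = true`): the non-unital subalgebra generated by vertices, edges, and ghost edges. -/
noncomputable def clSub (t : Bool) : NonUnitalSubalgebra K (E.CL K t) :=
  NonUnitalAlgebra.adjoin K
    (Set.range (E.clvtx K t) ∪ Set.range (E.cledg K t) ∪ Set.range (E.clghost K t))

/-- The center of `C_K(E)` (`t = false`) or of `L_K(E)` (`t = true`). -/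
def clCenter (t : Bool) : Set (E.CL K t) :=
  {z | z ∈ E.clSub K t ∧ ∀ a ∈ E.clSub K t, a * z = z * a}

/-- The element `μ` of `C_K(E)` / `L_K(E)` for the path `μ` starting at `u` with edges `l`. -/
noncomputable def clPath (t : Bool) (u : E.V) (l : List E.Edge) : E.CL K t :=
  E.clvtx K t u * (l.map (E.cledg K t)).prod

/-- The element `μ*` of `C_K(E)` / `L_K(E)` for the path `μ` starting at `u` with edges `l`. -/
noncomputable def clPathStar (t : Bool) (u : E.V) (l : List E.Edge) : E.CL K t :=
  ((l.map (E.clghost K t)).reverse).prod * E.clvtx K t u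

/-- The sum of all vertices: the unit of `C_K(E)` / `L_K(E)` when `E⁰` is finite. -/
noncomputable def clOne (t : Bool) : E.CL K t := ∑ᶠ u : E.V, E.clvtx K t u

/-- The degree-zero component (w.r.t. the canonical ℤ-grading) of `C_K(E)` / `L_K(E)`:
the span of the elements `στ*` with `σ, τ` paths of equal length and common range. -/
def clDeg0 (t : Bool) : Submodule K (E.CL K t) :=
  Submodule.span K {x : E.CL K t | ∃ (u w v : E.V) (l m : List E.Edge),
    E.IsPathFrom u v l ∧ E.IsPathFrom w v m ∧ l.length = m.length ∧
    x = E.clPath K t u l * E.clPathStar K t w m}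

/-- The span of the symmetric elements `μμ*`, `μ` a path of `E`. -/
def clSymmSpan (t : Bool) : Submodule K (E.CL K t) :=
  Submodule.span K {x : E.CL K t | ∃ (u v : E.V) (l : List E.Edge),
    E.IsPathFrom u v l ∧ x = E.clPath K t u l * E.clPathStar K t u l}

/-- A subset `H ⊆ E⁰` is hereditary if paths starting in `H` end in `H`. -/
def Hereditary (H : Set E.V) : Prop :=
  ∀ (u v : E.V) (l : List E.Edge), E.IsPathFrom u v l → u ∈ H → v ∈ H

/-- The two-sided ideal of `C_K(E)` / `L_K(E)` generated by a subset `S₀`. -/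
def clIdealGen (t : Bool) (S₀ : Set (E.CL K t)) : Set (E.CL K t) :=
  ⋂₀ {J : Set (E.CL K t) | IsIdealOf K (E.clSub K t : Set (E.CL K t)) J ∧ S₀ ⊆ J}

/-- `c` is a cycle based at `u`: a nontrivial closed path visiting no vertex twice. -/
def IsCycle (u : E.V) (l : List E.Edge) : Prop :=
  l ≠ [] ∧ E.IsPathFrom u u l ∧ (l.map E.s).Nodup

/-- The (closed) path `l` has an exit. -/
def HasExit (l : List E.Edge) : Prop :=
  ∃ f : E.Edge, ∃ e ∈ l, E.s f = E.s e ∧ f ≠ e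

/-- Condition (L): every cycle of `E` has an exit. -/
def CondL : Prop := ∀ (u : E.V) (l : List E.Edge), E.IsCycle u l → E.HasExit l

/-- The set of paths (given by their source and list of edges) that end at a vertex of the
cycle `c` and do not contain all the edges of `c`. -/
def endsAtNotContaining (c : List E.Edge) : Set (E.V × List E.Edge) :=
  {p | (∃ v : E.V, (∃ e ∈ c, E.s e = v) ∧ E.IsPathFrom p.1 v p.2) ∧ ∃ e ∈ c, e ∉ p.2}

/-- `c` is the unique cycle of `E` without exits (uniqueness as a cycle: any cycle
without exits has the same edges as `c`). -/
def UniqueNoExitCycle (c : List E.Edge) : Prop :=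
  (∃ u : E.V, E.IsCycle u c ∧ ¬ E.HasExit c) ∧
    ∀ (u' : E.V) (c' : List E.Edge), E.IsCycle u' c' → ¬ E.HasExit c' →
      ∀ e : E.Edge, e ∈ c' ↔ e ∈ c

end DirGraph

/-! For paths `σ, τ` from `u` of equal length, `T_c(στ*) = (c*σ)(τ*c)`. If `|σ| ≥ |c|`, (CK1)
makes this `0` unless `σ = cσ'` and `τ = cτ'`, and then it is `σ'τ'*`; if `|σ| < |c|`, it is `0` or
`c₂*c₂ = u`, where `c = σc₂`. So a power of `T_c` carries every degree-zero element of `uAu` into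
`Ku`, which `T_c` preserves; hence a degree-zero fixed point already lies in `Ku`. For central `z`,
`zu` is such a fixed point, since `c*(zu)c = z c*c = zu`. -/

theorem Module.End.exists_pow_apply_mem_of_mem_span {R M : Type*} [Semiring R]
    [AddCommMonoid M] [Module R M] {T : Module.End R M} {P : Submodule R M}
    (hP : ∀ y ∈ P, T y ∈ P) {s : Set M} (hs : ∀ x ∈ s, ∃ N, (T ^ N) x ∈ P) {x : M}
    (hx : x ∈ Submodule.span R s) : ∃ N, (T ^ N) x ∈ P := by
  have mono : ∀ {N N' : ℕ} {y : M}, (T ^ N) y ∈ P → N ≤ N' → (T ^ N') y ∈ P := by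
    intro N N' y hy hle
    obtain ⟨k, rfl⟩ := Nat.exists_eq_add_of_le' hle
    rw [Module.End.pow_apply] at hy ⊢
    rw [Function.iterate_add_apply]
    exact Set.MapsTo.iterate (f := T) (s := P) hP k hy
  induction hx using Submodule.span_induction with
  | mem x hx => exact hs x hx
  | zero => exact ⟨0, by simp⟩
  | add x y _ _ hx hy =>
    obtain ⟨N₁, h₁⟩ := hx
    obtain ⟨N₂, h₂⟩ := hy
    refine ⟨max N₁ N₂, ?_⟩
    rw [map_add]
    exact add_mem (mono h₁ (le_max_left _ _)) (mono h₂ (le_max_right _ _))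
  | smul a x _ hx =>
    obtain ⟨N, h⟩ := hx
    exact ⟨N, by rw [map_smul]; exact P.smul_mem a h⟩

namespace DirGraph

lemma IsPathFrom.end_unique {E : DirGraph} {w v₁ v₂ : E.V} {m : List E.Edge}
    (h₁ : E.IsPathFrom w v₁ m) (h₂ : E.IsPathFrom w v₂ m) : v₁ = v₂ := by
  induction m generalizing w with
  | nil => exact h₁.symm.trans h₂
  | cons e m ih => exact ih h₁.2 h₂.2

lemma IsPathFrom.of_append {E : DirGraph} {u v : E.V} {a b : List E.Edge}
    (h : E.IsPathFrom u v (a ++ b)) : ∃ w, E.IsPathFrom u w a ∧ E.IsPathFrom w v b := by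
  induction a generalizing u with
  | nil => exact ⟨u, rfl, h⟩
  | cons e a ih =>
    obtain ⟨w, ha, hb⟩ := ih h.2
    exact ⟨w, ⟨h.1, ha⟩, hb⟩

variable (K : Type) [Field K] {E : DirGraph} {t : Bool}

section Relations

lemma clvtx_mul_self (u : E.V) : E.clvtx K t u * E.clvtx K t u = E.clvtx K t u := by
  rw [clvtx, ← map_mul]
  exact RingQuot.mkAlgHom_rel K (CLRel.base t (PathRel.vv_eq (E := E.ext) u))

lemma clvtx_mul_clvtx_of_ne {u v : E.V} (h : u ≠ v) :
    E.clvtx K t u * E.clvtx K t v = 0 := by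
  rw [clvtx, clvtx, ← map_mul,
    RingQuot.mkAlgHom_rel K (CLRel.base t (PathRel.vv_ne (E := E.ext) u v h)), map_zero]

lemma clvtx_mul_cledg (e : E.Edge) : E.clvtx K t (E.s e) * E.cledg K t e = E.cledg K t e := by
  rw [clvtx, cledg, ← map_mul]
  exact RingQuot.mkAlgHom_rel K (CLRel.base t (PathRel.ve_eq (E := E.ext) (Sum.inl e)))

lemma cledg_mul_clvtx (e : E.Edge) : E.cledg K t e * E.clvtx K t (E.r e) = E.cledg K t e := by
  rw [clvtx, cledg, ← map_mul]
  exact RingQuot.mkAlgHom_rel K (CLRel.base t (PathRel.ev_eq (E := E.ext) (Sum.inl e)))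

lemma clvtx_mul_clghost (e : E.Edge) :
    E.clvtx K t (E.r e) * E.clghost K t e = E.clghost K t e := by
  rw [clvtx, clghost, ← map_mul]
  exact RingQuot.mkAlgHom_rel K (CLRel.base t (PathRel.ve_eq (E := E.ext) (Sum.inr e)))

lemma clghost_mul_clvtx (e : E.Edge) :
    E.clghost K t e * E.clvtx K t (E.s e) = E.clghost K t e := by
  rw [clvtx, clghost, ← map_mul]
  exact RingQuot.mkAlgHom_rel K (CLRel.base t (PathRel.ev_eq (E := E.ext) (Sum.inr e)))

lemma clghost_mul_cledg (e : E.Edge) :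
    E.clghost K t e * E.cledg K t e = E.clvtx K t (E.r e) := by
  rw [clvtx, clghost, cledg, ← map_mul]
  exact RingQuot.mkAlgHom_rel K (CLRel.ck1_eq t e)

lemma clghost_mul_cledg_of_ne {e f : E.Edge} (h : e ≠ f) :
    E.clghost K t e * E.cledg K t f = 0 := by
  rw [clghost, cledg, ← map_mul]
  exact (RingQuot.mkAlgHom_rel K (CLRel.ck1_ne t e f h)).trans (map_zero _)

end Relations

section Paths

lemma clvtx_mem (u : E.V) : E.clvtx K t u ∈ E.clSub K t :=
  NonUnitalAlgebra.subset_adjoin K (Or.inl (Or.inl ⟨u, rfl⟩))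

lemma cledg_mem (e : E.Edge) : E.cledg K t e ∈ E.clSub K t :=
  NonUnitalAlgebra.subset_adjoin K (Or.inl (Or.inr ⟨e, rfl⟩))

lemma clPath_mem (u : E.V) (l : List E.Edge) : E.clPath K t u l ∈ E.clSub K t := by
  induction l using List.reverseRecOn with
  | nil => simpa [clPath] using clvtx_mem K u
  | append_singleton l e ih =>
    rw [show E.clPath K t u (l ++ [e]) = E.clPath K t u l * E.cledg K t e by
      simp [clPath, mul_assoc]]
    exact mul_mem ih (cledg_mem K e)

@[simp] lemma clPath_nil (u : E.V) : E.clPath K t u [] = E.clvtx K t u := by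
  simp [clPath]

@[simp] lemma clPathStar_nil (u : E.V) : E.clPathStar K t u [] = E.clvtx K t u := by
  simp [clPathStar]

lemma clvtx_mul_clPath (u : E.V) (l : List E.Edge) :
    E.clvtx K t u * E.clPath K t u l = E.clPath K t u l := by
  rw [clPath, ← mul_assoc, clvtx_mul_self]

lemma clvtx_mul_clPath_of_ne {u w : E.V} (h : u ≠ w) (l : List E.Edge) :
    E.clvtx K t u * E.clPath K t w l = 0 := by
  rw [clPath, ← mul_assoc, clvtx_mul_clvtx_of_ne K h, zero_mul]

lemma clPathStar_mul_clvtx (u : E.V) (l : List E.Edge) :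
    E.clPathStar K t u l * E.clvtx K t u = E.clPathStar K t u l := by
  rw [clPathStar, mul_assoc, clvtx_mul_self]

lemma clPathStar_mul_clvtx_of_ne {w u : E.V} (h : w ≠ u) (l : List E.Edge) :
    E.clPathStar K t w l * E.clvtx K t u = 0 := by
  rw [clPathStar, mul_assoc, clvtx_mul_clvtx_of_ne K h, mul_zero]

lemma clPath_cons {u : E.V} {e : E.Edge} (he : E.s e = u) (l : List E.Edge) :
    E.clPath K t u (e :: l) = E.cledg K t e * E.clPath K t (E.r e) l := by
  subst he
  rw [clPath, clPath, List.map_cons, List.prod_cons, ← mul_assoc, clvtx_mul_cledg,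
    ← mul_assoc, cledg_mul_clvtx]

lemma clPathStar_cons {u : E.V} {e : E.Edge} (he : E.s e = u) (l : List E.Edge) :
    E.clPathStar K t u (e :: l) = E.clPathStar K t (E.r e) l * E.clghost K t e := by
  subst he
  simp only [clPathStar, List.map_cons, List.reverse_cons, List.prod_append, List.prod_cons,
    List.prod_nil, mul_one, mul_assoc]
  rw [clghost_mul_clvtx, clvtx_mul_clghost]

lemma clPath_append {u w : E.V} {a : List E.Edge} (h : E.IsPathFrom u w a) (b : List E.Edge) :
    E.clPath K t u (a ++ b) = E.clPath K t u a * E.clPath K t w b := by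
  induction a generalizing u with
  | nil => cases h; rw [List.nil_append, clPath_nil, clvtx_mul_clPath]
  | cons e a ih => rw [List.cons_append, clPath_cons K h.1, clPath_cons K h.1, ih h.2, mul_assoc]

lemma clPathStar_append {u w : E.V} {a : List E.Edge} (h : E.IsPathFrom u w a)
    (b : List E.Edge) :
    E.clPathStar K t u (a ++ b) = E.clPathStar K t w b * E.clPathStar K t u a := by
  induction a generalizing u with
  | nil => cases h; rw [List.nil_append, clPathStar_nil, clPathStar_mul_clvtx]
  | cons e a ih =>
    rw [List.cons_append, clPathStar_cons K h.1, clPathStar_cons K h.1, ih h.2, mul_assoc]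

lemma clPathStar_mul_clPath_self {w v : E.V} {m : List E.Edge} (h : E.IsPathFrom w v m) :
    E.clPathStar K t w m * E.clPath K t w m = E.clvtx K t v := by
  induction m generalizing w with
  | nil => cases h; rw [clPathStar_nil, clPath_nil, clvtx_mul_self]
  | cons e m ih =>
    rw [clPathStar_cons K h.1, clPath_cons K h.1, mul_assoc, ← mul_assoc (E.clghost K t e),
      clghost_mul_cledg, clvtx_mul_clPath, ih h.2]

lemma clPathStar_mul_clPath_of_ne {w v v' : E.V} {m l : List E.Edge}
    (hm : E.IsPathFrom w v m) (hl : E.IsPathFrom w v' l) (hlen : m.length = l.length)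
    (hne : m ≠ l) : E.clPathStar K t w m * E.clPath K t w l = 0 := by
  induction m generalizing w l with
  | nil => exact absurd (List.length_eq_zero_iff.mp hlen.symm).symm hne
  | cons e m ih =>
    obtain _ | ⟨f, l⟩ := l
    · simp at hlen
    rw [clPathStar_cons K hm.1, clPath_cons K hl.1, mul_assoc, ← mul_assoc (E.clghost K t e)]
    by_cases hef : e = f
    · subst hef
      rw [clghost_mul_cledg, clvtx_mul_clPath,
        ih hm.2 hl.2 (by simpa using hlen) (by simpa using hne)]
    · rw [clghost_mul_cledg_of_ne K hef, zero_mul, mul_zero]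

end Paths

section PathConj

/-- The map `T_c` of the paper. -/
noncomputable def pathConj (u : E.V) (c : List E.Edge) : Module.End K (E.CL K t) :=
  LinearMap.mulLeft K (E.clPathStar K t u c) ∘ₗ LinearMap.mulRight K (E.clPath K t u c)

lemma pathConj_apply (u : E.V) (c : List E.Edge) (x : E.CL K t) :
    pathConj K u c x = E.clPathStar K t u c * x * E.clPath K t u c := by
  simp [pathConj, mul_assoc]

lemma pathConj_append {u x : E.V} {c₁ : List E.Edge} (h : E.IsPathFrom u x c₁)
    (c₂ : List E.Edge) (y : E.CL K t) :
    pathConj K u (c₁ ++ c₂) y = pathConj K x c₂ (pathConj K u c₁ y) := by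
  simp only [pathConj_apply, clPath_append K h, clPathStar_append K h, mul_assoc]

lemma pathConj_clvtx {u v : E.V} {c : List E.Edge} (hc : E.IsPathFrom u v c) :
    pathConj K u c (E.clvtx K t u) = E.clvtx K t v := by
  rw [pathConj_apply, clPathStar_mul_clvtx, clPathStar_mul_clPath_self K hc]

lemma pathConj_mem_span_clvtx {u : E.V} {c : List E.Edge} (hc : E.IsPathFrom u u c)
    {x : E.CL K t} (hx : x ∈ K ∙ E.clvtx K t u) : pathConj K u c x ∈ K ∙ E.clvtx K t u := by
  obtain ⟨k, rfl⟩ := Submodule.mem_span_singleton.mp hx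
  rw [map_smul, pathConj_clvtx K hc]
  exact Submodule.smul_mem _ _ (Submodule.mem_span_singleton_self _)

variable {u : E.V} {c : List E.Edge}

lemma pathConj_clPath_mul_clPathStar_mem_of_length_lt (hc : E.IsPathFrom u u c) {v : E.V}
    {σ τ : List E.Edge} (hσ : E.IsPathFrom u v σ) (hτ : E.IsPathFrom u v τ)
    (hlen : σ.length = τ.length) (hlt : σ.length < c.length) :
    pathConj K u c (E.clPath K t u σ * E.clPathStar K t u τ) ∈ K ∙ E.clvtx K t u := by
  obtain ⟨c₁, c₂, rfl, hc₁⟩ : ∃ c₁ c₂, c = c₁ ++ c₂ ∧ c₁.length = σ.length :=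
    ⟨c.take σ.length, c.drop σ.length, (List.take_append_drop _ _).symm, by simp; omega⟩
  obtain ⟨x, hx₁, hx₂⟩ := hc.of_append
  have split : pathConj K u c₁ (E.clPath K t u σ * E.clPathStar K t u τ) =
      (E.clPathStar K t u c₁ * E.clPath K t u σ) *
        (E.clPathStar K t u τ * E.clPath K t u c₁) := by
    rw [pathConj_apply]; simp only [mul_assoc]
  rw [pathConj_append K hx₁, split]
  by_cases hpre : σ = c₁ ∧ τ = c₁
  · obtain ⟨rfl, rfl⟩ := hpre
    obtain rfl := hx₁.end_unique hσ
    rw [clPathStar_mul_clPath_self K hσ, clvtx_mul_self, pathConj_clvtx K hx₂]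
    exact Submodule.mem_span_singleton_self _
  rcases not_and_or.mp hpre with h | h
  · rw [clPathStar_mul_clPath_of_ne K hx₁ hσ hc₁ (Ne.symm h), zero_mul, map_zero]
    exact zero_mem _
  · rw [clPathStar_mul_clPath_of_ne K hτ hx₁ (hlen.symm.trans hc₁.symm) h, mul_zero, map_zero]
    exact zero_mem _

lemma pathConj_append_mul_append {x : E.V} (hc : E.IsPathFrom u x c) (σ τ : List E.Edge) :
    pathConj K u c (E.clPath K t u (c ++ σ) * E.clPathStar K t u (c ++ τ)) =
      E.clPath K t x σ * E.clPathStar K t x τ := by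
  rw [clPath_append K hc, clPathStar_append K hc, pathConj_apply]
  calc _ = (E.clPathStar K t u c * E.clPath K t u c) * (E.clPath K t x σ *
        E.clPathStar K t x τ) * (E.clPathStar K t u c * E.clPath K t u c) := by
        simp only [mul_assoc]
    _ = _ := by
      rw [clPathStar_mul_clPath_self K hc, ← mul_assoc, clvtx_mul_clPath, mul_assoc,
        clPathStar_mul_clvtx]

lemma pathConj_append_mul_append_of_ne {x y z : E.V} {σ₁ τ₁ : List E.Edge}
    (hσ₁ : E.IsPathFrom u x σ₁) (hτ₁ : E.IsPathFrom u y τ₁) (hc : E.IsPathFrom u z c)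
    (hσlen : σ₁.length = c.length) (hτlen : τ₁.length = c.length)
    (hpre : ¬ (σ₁ = c ∧ τ₁ = c)) (σ₂ τ₂ : List E.Edge) :
    pathConj K u c (E.clPath K t u (σ₁ ++ σ₂) * E.clPathStar K t u (τ₁ ++ τ₂)) = 0 := by
  rw [clPath_append K hσ₁, clPathStar_append K hτ₁, pathConj_apply]
  have split : E.clPathStar K t u c * (E.clPath K t u σ₁ * E.clPath K t x σ₂ *
      (E.clPathStar K t y τ₂ * E.clPathStar K t u τ₁)) * E.clPath K t u c =
      (E.clPathStar K t u c * E.clPath K t u σ₁) *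
        (E.clPath K t x σ₂ * E.clPathStar K t y τ₂) *
        (E.clPathStar K t u τ₁ * E.clPath K t u c) := by
    simp only [mul_assoc]
  rw [split]
  rcases not_and_or.mp hpre with h | h
  · rw [clPathStar_mul_clPath_of_ne K hc hσ₁ hσlen.symm (Ne.symm h), zero_mul, zero_mul]
  · rw [clPathStar_mul_clPath_of_ne K hτ₁ hc hτlen h, mul_zero]

lemma exists_pow_pathConj_clPath_mul_clPathStar_mem (hc0 : c ≠ [])
    (hc : E.IsPathFrom u u c) {v : E.V} {σ τ : List E.Edge} (hσ : E.IsPathFrom u v σ)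
    (hτ : E.IsPathFrom u v τ) (hlen : σ.length = τ.length) :
    ∃ N, (pathConj K u c ^ N) (E.clPath K t u σ * E.clPathStar K t u τ) ∈
      K ∙ E.clvtx K t u := by
  induction hn : σ.length using Nat.strong_induction_on generalizing σ τ with
  | _ n ih =>
  rcases lt_or_ge σ.length c.length with hlt | hge
  · exact ⟨1, by
      rw [pow_one]; exact pathConj_clPath_mul_clPathStar_mem_of_length_lt K hc hσ hτ hlen hlt⟩
  obtain ⟨σ₁, σ₂, rfl, hσ₁⟩ : ∃ σ₁ σ₂, σ = σ₁ ++ σ₂ ∧ σ₁.length = c.length :=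
    ⟨σ.take c.length, σ.drop c.length, (List.take_append_drop _ _).symm, by simp; omega⟩
  obtain ⟨τ₁, τ₂, rfl, hτ₁⟩ : ∃ τ₁ τ₂, τ = τ₁ ++ τ₂ ∧ τ₁.length = c.length :=
    ⟨τ.take c.length, τ.drop c.length, (List.take_append_drop _ _).symm, by simp; omega⟩
  obtain ⟨x, hx, hσ₂⟩ := hσ.of_append
  obtain ⟨y, hy, hτ₂⟩ := hτ.of_append
  by_cases hpre : σ₁ = c ∧ τ₁ = c
  · obtain ⟨rfl, rfl⟩ := hpre
    obtain rfl := hc.end_unique hx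
    obtain rfl := hc.end_unique hy
    obtain ⟨N, hN⟩ := ih σ₂.length
      (by have := List.length_pos_iff.mpr hc0; simp at hn; omega) hσ₂ hτ₂
      (by simpa using hlen) rfl
    refine ⟨N + 1, ?_⟩
    rwa [pow_succ, Module.End.mul_apply, pathConj_append_mul_append K hc]
  · refine ⟨1, ?_⟩
    rw [pow_one, pathConj_append_mul_append_of_ne K hx hy hc hσ₁ hτ₁ hpre]
    exact zero_mem _

end PathConj

section Degree0

variable {u : E.V} {c : List E.Edge}

lemma exists_pow_pathConj_corner_mem (hc0 : c ≠ []) (hc : E.IsPathFrom u u c)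
    {ω : E.CL K t} (hω : ω ∈ E.clDeg0 K t) :
    ∃ N, (pathConj K u c ^ N) (E.clvtx K t u * ω * E.clvtx K t u) ∈ K ∙ E.clvtx K t u := by
  let corner : Module.End K (E.CL K t) :=
    LinearMap.mulLeft K (E.clvtx K t u) ∘ₗ LinearMap.mulRight K (E.clvtx K t u)
  have corner_apply (x : E.CL K t) : corner x = E.clvtx K t u * x * E.clvtx K t u := by
    simp [corner, mul_assoc]
  have hmem := Submodule.mem_map_of_mem (f := corner) hω
  rw [clDeg0, Submodule.map_span, corner_apply] at hmem
  refine Module.End.exists_pow_apply_mem_of_mem_span (fun _ => pathConj_mem_span_clvtx K hc)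
    ?_ hmem
  rintro _ ⟨_, ⟨u', w, v, σ, τ, hσ, hτ, hlen, rfl⟩, rfl⟩
  rw [corner_apply, mul_assoc, mul_assoc, ← mul_assoc]
  rcases eq_or_ne u u' with rfl | hu
  · rcases eq_or_ne w u with rfl | hw
    · rw [clvtx_mul_clPath, clPathStar_mul_clvtx]
      exact exists_pow_pathConj_clPath_mul_clPathStar_mem K hc0 hc hσ hτ hlen
    · exact ⟨0, by rw [clPathStar_mul_clvtx_of_ne K hw, mul_zero, map_zero]; exact zero_mem _⟩
  · exact ⟨0, by rw [clvtx_mul_clPath_of_ne K hu, zero_mul, map_zero]; exact zero_mem _⟩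

theorem mem_span_clvtx_of_pathConj_eq_self (hc0 : c ≠ []) (hc : E.IsPathFrom u u c)
    {ω : E.CL K t} (hω : ω ∈ E.clDeg0 K t) (hωu : E.clvtx K t u * ω * E.clvtx K t u = ω)
    (hfix : pathConj K u c ω = ω) : ω ∈ K ∙ E.clvtx K t u := by
  obtain ⟨N, hN⟩ := exists_pow_pathConj_corner_mem K hc0 hc hω
  rwa [hωu, Module.End.pow_apply, Function.iterate_fixed hfix] at hN

lemma mul_clvtx_mem_clDeg0 {x : E.CL K t} (hx : x ∈ E.clDeg0 K t) (u : E.V) :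
    x * E.clvtx K t u ∈ E.clDeg0 K t := by
  induction hx using Submodule.span_induction with
  | mem x hx =>
    obtain ⟨u', w, v, σ, τ, hσ, hτ, hlen, rfl⟩ := hx
    rcases eq_or_ne w u with rfl | hw
    · rw [mul_assoc, clPathStar_mul_clvtx]
      exact Submodule.subset_span ⟨u', w, v, σ, τ, hσ, hτ, hlen, rfl⟩
    · rw [mul_assoc, clPathStar_mul_clvtx_of_ne K hw, mul_zero]
      exact zero_mem _
  | zero => rw [zero_mul]; exact zero_mem _
  | add x y _ _ hx hy => rw [add_mul]; exact add_mem hx hy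
  | smul a x _ hx => rw [smul_mul_assoc]; exact Submodule.smul_mem _ _ hx

end Degree0

end DirGraph

open DirGraph

/-- Let `A = C_K(E)` (`t = false`) or `L_K(E)` (`t = true`) and let
`c` be a (nontrivial) closed path based at `u`.  Any degree-zero fixed point `ω ∈ uAu` of
`T_c : x ↦ c*xc` lies in `Ku`.  Consequently, if `z` is a degree-zero central element and
there is a closed path based at `u`, then the Peirce component `z_u = z·u` lies in `Ku`. -/
theorem stmt17 (K : Type) [Field K] (E : DirGraph) (t : Bool)
    (u : E.V) (l : List E.Edge) (hl : l ≠ []) (hpath : E.IsPathFrom u u l) :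
    (∀ ω ∈ E.clSub K t, ω ∈ E.clDeg0 K t →
        E.clvtx K t u * ω * E.clvtx K t u = ω →
        E.clPathStar K t u l * ω * E.clPath K t u l = ω →
        ∃ k : K, ω = k • E.clvtx K t u) ∧
    (∀ z ∈ E.clCenter K t, z ∈ E.clDeg0 K t →
        ∃ k : K, z * E.clvtx K t u = k • E.clvtx K t u) := by
  have fixed (ω : E.CL K t) (hω : ω ∈ E.clDeg0 K t)
      (hωu : E.clvtx K t u * ω * E.clvtx K t u = ω)
      (hfix : E.clPathStar K t u l * ω * E.clPath K t u l = ω) :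
      ∃ k : K, ω = k • E.clvtx K t u := by
    obtain ⟨k, hk⟩ := Submodule.mem_span_singleton.mp <|
      mem_span_clvtx_of_pathConj_eq_self K hl hpath hω hωu (by rwa [pathConj_apply])
    exact ⟨k, hk.symm⟩
  refine ⟨fun ω _ => fixed ω, fun z ⟨_, hcomm⟩ hz =>
    fixed _ (mul_clvtx_mem_clDeg0 K hz u) ?_ ?_⟩
  · rw [mul_assoc, mul_assoc, clvtx_mul_self, ← mul_assoc, hcomm _ (clvtx_mem K u), mul_assoc,
      clvtx_mul_self]
  · rw [mul_assoc, mul_assoc, clvtx_mul_clPath, ← hcomm _ (clPath_mem K u l), ← mul_assoc,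
      clPathStar_mul_clPath_self K hpath, hcomm _ (clvtx_mem K u)]
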